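/- arXiv:1711.00991 — 7 statements merged into one kernel-verified Lean document; each statement's English description precedes it below -/
import Mathlib

section
/- Let A be a von Neumann algebra (or take A = B(H)), P its lattice of orthogonal projections, a ∈ A, and p ∈ P. Then the set Q = {q ∈ P : pa = qa} is a complete sublattice of P; in particular Q is closed under arbitrary infima and suprema taken in P. -/
/-!
A star projection `q` on a Hilbert space is determined by its closed range `K`, and `q y = z`
holds exactly when `z ∈ K` and `y - z ⊥ K`. Hence `q * a = b` says that `K` lies between the fixed
subspaces `range b` and `(range (a - b))ᗮ`, while `s = s * q` says `range s ≤ K`. A condition of the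
form `range b ≤ K ≤ (range (a - b))ᗮ` survives intersections and closed spans of nonempty families
(the upper bound is closed), so the meet and the join of the `q` with `q * a = b` satisfy it too.
-/

open Submodule

section StarProjection

variable {𝕜 E : Type*} [RCLike 𝕜] [NormedAddCommGroup E] [InnerProductSpace 𝕜 E] [CompleteSpace E]

namespace IsStarProjection

variable {q : E →L[𝕜] E}

theorem apply_eq_iff (hq : IsStarProjection q) {y z : E} :
    q y = z ↔ z ∈ q.range ∧ y - z ∈ q.rangeᗮ := by
  obtain ⟨_, hq'⟩ := isStarProjection_iff_eq_starProjection_range.mp hq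
  conv_lhs => rw [hq']
  constructor
  · rintro rfl
    exact ⟨starProjection_apply_mem _ y, sub_starProjection_mem_orthogonal y⟩
  · rintro ⟨hz, hyz⟩
    exact eq_starProjection_of_mem_orthogonal hz hyz

theorem mul_eq_right_iff_range_le (hq : IsStarProjection q) (s : E →L[𝕜] E) :
    q * s = s ↔ s.range ≤ q.range := by
  rw [← LinearMap.IsIdempotentElem.comp_eq_right_iff
    (ContinuousLinearMap.IsIdempotentElem.toLinearMap hq.isIdempotentElem)]
  exact ContinuousLinearMap.coe_inj.symm

theorem eq_mul_iff_range_le {s : E →L[𝕜] E} (hs : IsStarProjection s) (hq : IsStarProjection q) :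
    s = s * q ↔ s.range ≤ q.range := by
  rw [← hq.mul_eq_right_iff_range_le, eq_comm]
  constructor <;> intro h <;>
    simpa [hs.isSelfAdjoint.star_eq, hq.isSelfAdjoint.star_eq] using congrArg star h

theorem mul_eq_iff (hq : IsStarProjection q) (a b : E →L[𝕜] E) :
    q * a = b ↔ b.range ≤ q.range ∧ q.range ≤ (a - b).rangeᗮ := by
  rw [← isOrtho_iff_le, isOrtho_comm, isOrtho_iff_le, ContinuousLinearMap.ext_iff]
  simp only [mul_apply_eq_comp, hq.apply_eq_iff, forall_and]
  simp only [SetLike.le_def, LinearMap.mem_range, forall_exists_index, forall_apply_eq_imp_iff,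
    ContinuousLinearMap.coe_coe, sub_apply]

theorem isClosed_range (hq : IsStarProjection q) : IsClosed (q.range : Set E) :=
  ContinuousLinearMap.IsIdempotentElem.isClosed_range hq.isIdempotentElem

end IsStarProjection

theorem exists_isStarProjection_range_eq {K : Submodule 𝕜 E} (hK : IsClosed (K : Set E)) :
    ∃ r : E →L[𝕜] E, IsStarProjection r ∧ r.range = K :=
  have := hK.completeSpace_coe
  ⟨K.starProjection, isStarProjection_starProjection, K.range_starProjection⟩

section MulEq

variable {a b : E →L[𝕜] E} {R : Set (E →L[𝕜] E)}

theorem exists_isStarProjection_inf_of_mul_eq (hRne : R.Nonempty)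
    (hR : ∀ q ∈ R, IsStarProjection q ∧ q * a = b) :
    ∃ r : E →L[𝕜] E, IsStarProjection r ∧ r * a = b ∧ (∀ q ∈ R, r = r * q) ∧
      ∀ s : E →L[𝕜] E, IsStarProjection s → (∀ q ∈ R, s = s * q) → s = s * r := by
  have hK : IsClosed ((⨅ q ∈ R, q.range : Submodule 𝕜 E) : Set E) := by
    simpa only [Submodule.coe_iInf] using isClosed_biInter fun q hq ↦ (hR q hq).1.isClosed_range
  obtain ⟨r, hr, hrK⟩ := exists_isStarProjection_range_eq hK
  obtain ⟨q₀, hq₀⟩ := hRne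
  refine ⟨r, hr, ?_, fun q hq ↦ ?_, fun s hs hsR ↦ ?_⟩
  · refine (hr.mul_eq_iff a b).2 ⟨hrK ▸ le_iInf₂ fun q hq ↦ ?_, ?_⟩
    · exact (((hR q hq).1.mul_eq_iff a b).1 (hR q hq).2).1
    · exact hrK ▸ (iInf₂_le q₀ hq₀).trans (((hR q₀ hq₀).1.mul_eq_iff a b).1 (hR q₀ hq₀).2).2
  · exact (hr.eq_mul_iff_range_le (hR q hq).1).2 (hrK ▸ iInf₂_le q hq)
  · refine (hs.eq_mul_iff_range_le hr).2 (hrK ▸ le_iInf₂ fun q hq ↦ ?_)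
    exact (hs.eq_mul_iff_range_le (hR q hq).1).1 (hsR q hq)

theorem exists_isStarProjection_sup_of_mul_eq (hRne : R.Nonempty)
    (hR : ∀ q ∈ R, IsStarProjection q ∧ q * a = b) :
    ∃ r : E →L[𝕜] E, IsStarProjection r ∧ r * a = b ∧ (∀ q ∈ R, q = q * r) ∧
      ∀ s : E →L[𝕜] E, IsStarProjection s → (∀ q ∈ R, q = q * s) → r = r * s := by
  set K := (⨆ q ∈ R, q.range : Submodule 𝕜 E).topologicalClosure
  have hle : ∀ q ∈ R, q.range ≤ K := fun q hq ↦
    (le_iSup₂ (f := fun q (_ : q ∈ R) ↦ q.range) q hq).trans (le_topologicalClosure _)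
  have hKle {L : Submodule 𝕜 E} (hL : IsClosed (L : Set E)) (h : ∀ q ∈ R, q.range ≤ L) : K ≤ L :=
    topologicalClosure_minimal _ (iSup₂_le h) hL
  obtain ⟨r, hr, hrK⟩ := exists_isStarProjection_range_eq (K := K) (isClosed_topologicalClosure _)
  obtain ⟨q₀, hq₀⟩ := hRne
  refine ⟨r, hr, ?_, fun q hq ↦ ?_, fun s hs hsR ↦ ?_⟩
  · refine (hr.mul_eq_iff a b).2 ⟨hrK ▸ ?_, hrK ▸ hKle (isClosed_orthogonal _) fun q hq ↦ ?_⟩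
    · exact (((hR q₀ hq₀).1.mul_eq_iff a b).1 (hR q₀ hq₀).2).1.trans (hle q₀ hq₀)
    · exact (((hR q hq).1.mul_eq_iff a b).1 (hR q hq).2).2
  · exact ((hR q hq).1.eq_mul_iff_range_le hr).2 (hrK ▸ hle q hq)
  · refine (hr.eq_mul_iff_range_le hs).2 (hrK ▸ hKle hs.isClosed_range fun q hq ↦ ?_)
    exact ((hR q hq).1.eq_mul_iff_range_le hs).1 (hsR q hq)

end MulEq

end StarProjection

theorem stmt_4_general {H : Type*} [NormedAddCommGroup H] [InnerProductSpace ℝ H] [CompleteSpace H]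
    (a p : H →L[ℝ] H)
    (R : Set (H →L[ℝ] H)) (hRne : R.Nonempty)
    (hR : ∀ q ∈ R, (IsSelfAdjoint q ∧ q * q = q) ∧ p * a = q * a) :
    (∃ r : H →L[ℝ] H, (IsSelfAdjoint r ∧ r * r = r) ∧ p * a = r * a ∧
      (∀ q ∈ R, r = r * q) ∧
      ∀ s : H →L[ℝ] H, IsSelfAdjoint s → s * s = s → (∀ q ∈ R, s = s * q) → s = s * r) ∧
    (∃ r : H →L[ℝ] H, (IsSelfAdjoint r ∧ r * r = r) ∧ p * a = r * a ∧
      (∀ q ∈ R, q = q * r) ∧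
      ∀ s : H →L[ℝ] H, IsSelfAdjoint s → s * s = s → (∀ q ∈ R, q = q * s) → r = r * s) := by
  have hR' : ∀ q ∈ R, IsStarProjection q ∧ q * a = p * a :=
    fun q hq ↦ ⟨⟨(hR q hq).1.2, (hR q hq).1.1⟩, (hR q hq).2.symm⟩
  obtain ⟨r, hr, hra, hrR, hr_max⟩ := exists_isStarProjection_inf_of_mul_eq hRne hR'
  obtain ⟨r', hr', hr'a, hr'R, hr'_min⟩ := exists_isStarProjection_sup_of_mul_eq hRne hR'
  exact ⟨⟨r, ⟨hr.isSelfAdjoint, hr.isIdempotentElem⟩, hra.symm, hrR,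
      fun s hs hss ↦ hr_max s ⟨hss, hs⟩⟩,
    ⟨r', ⟨hr'.isSelfAdjoint, hr'.isIdempotentElem⟩, hr'a.symm, hr'R,
      fun s hs hss ↦ hr'_min s ⟨hss, hs⟩⟩⟩

theorem stmt_4 {H : Type*} [NormedAddCommGroup H] [InnerProductSpace ℝ H] [CompleteSpace H]
    (a p : H →L[ℝ] H) (hp : IsSelfAdjoint p ∧ p * p = p)
    (R : Set (H →L[ℝ] H)) (hRne : R.Nonempty)
    (hR : ∀ q ∈ R, (IsSelfAdjoint q ∧ q * q = q) ∧ p * a = q * a) :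
    (∃ r : H →L[ℝ] H, (IsSelfAdjoint r ∧ r * r = r) ∧ p * a = r * a ∧
      (∀ q ∈ R, r = r * q) ∧
      ∀ s : H →L[ℝ] H, IsSelfAdjoint s → s * s = s → (∀ q ∈ R, s = s * q) → s = s * r) ∧
    (∃ r : H →L[ℝ] H, (IsSelfAdjoint r ∧ r * r = r) ∧ p * a = r * a ∧
      (∀ q ∈ R, q = q * r) ∧
      ∀ s : H →L[ℝ] H, IsSelfAdjoint s → s * s = s → (∀ q ∈ R, q = q * s) → r = r * s) :=
  stmt_4_general a p R hRne hR
end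

section
/- Let x_1,...,x_d be vectors in a Hilbert space H with positive definite Gram matrix Σ = (⟨x_i, x_j⟩). Fix j ∈ [d] and S ⊆ [d]\{j}, and define T_j(S) = {T ⊆ [d]\{j} : P_T P_j = P_S P_j}. Then T_j(S), ordered by inclusion, is closed under intersections: if T_1, T_2 ∈ T_j(S) then T_1 ∩ T_2 ∈ T_j(S). -/
/-!
The Gram matrix being positive definite, the `x i` are linearly independent, so
`span (x '' T₁) ⊓ span (x '' T₂) = span (x '' (T₁ ∩ T₂))`. Since `P {j}` has range `ℝ ∙ x j`,
the condition `P T * P {j} = P S * P {j}` just says `P T (x j) = w := P S (x j)`. Then `w` lies in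
both `span (x '' T₁)` and `span (x '' T₂)`, hence in the smaller space `span (x '' (T₁ ∩ T₂))`,
and projecting `P T₁ (x j) = w` further onto that space leaves it unchanged.
-/

open Submodule

theorem LinearIndependent.span_image_inter {R M ι : Type*} [Semiring R] [AddCommMonoid M]
    [Module R M] {v : ι → M} (hv : LinearIndependent R v) (s t : Set ι) :
    span R (v '' (s ∩ t)) = span R (v '' s) ⊓ span R (v '' t) := by
  simp only [Finsupp.span_image_eq_map_linearCombination, Finsupp.supported_inter,
    Submodule.map_inf _ hv]

theorem ContinuousLinearMap.mul_eq_mul_iff_of_range_eq_span_singleton {R E : Type*} [Semiring R]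
    [TopologicalSpace E] [AddCommMonoid E] [Module R E] {A B Q : E →L[R] E} {u : E}
    (hQ : LinearMap.range (Q : E →ₗ[R] E) = span R {u}) : A * Q = B * Q ↔ A u = B u := by
  constructor
  · intro h
    obtain ⟨w, rfl⟩ : u ∈ LinearMap.range (Q : E →ₗ[R] E) := hQ ▸ mem_span_singleton_self u
    exact congr($h w)
  · intro h
    ext w
    obtain ⟨c, hc⟩ : ∃ c : R, c • u = Q w :=
      mem_span_singleton.mp (hQ ▸ LinearMap.mem_range_self (Q : E →ₗ[R] E) w)
    simp [← hc, h]

section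

variable {𝕜 E : Type*} [RCLike 𝕜] [NormedAddCommGroup E] [InnerProductSpace 𝕜 E]

theorem ContinuousLinearMap.eq_starProjection_of_range_eq [CompleteSpace E] {p : E →L[𝕜] E}
    (hsa : IsSelfAdjoint p) (hidem : p * p = p) {K : Submodule 𝕜 E} [K.HasOrthogonalProjection]
    (hK : LinearMap.range (p : E →ₗ[𝕜] E) = K) : p = K.starProjection := by
  obtain ⟨_, hp⟩ := isStarProjection_iff_eq_starProjection_range.mp ⟨hidem, hsa⟩
  subst hK
  exact hp

theorem Submodule.starProjection_eq_of_le_of_mem {U V : Submodule 𝕜 E}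
    [U.HasOrthogonalProjection] [V.HasOrthogonalProjection] (hUV : U ≤ V) {v : E}
    (hv : V.starProjection v ∈ U) : U.starProjection v = V.starProjection v := by
  rw [← starProjection_comp_starProjection_of_le hUV, ContinuousLinearMap.comp_apply,
    starProjection_eq_self_iff.mpr hv]

theorem Submodule.starProjection_eq_of_eq_inf {U V W : Submodule 𝕜 E}
    [U.HasOrthogonalProjection] [V.HasOrthogonalProjection] [W.HasOrthogonalProjection]
    (hW : W = U ⊓ V) {v : E} (h : U.starProjection v = V.starProjection v) :
    W.starProjection v = U.starProjection v := by
  subst hW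
  exact starProjection_eq_of_le_of_mem inf_le_left
    ⟨starProjection_apply_mem U v, h ▸ starProjection_apply_mem V v⟩

end

theorem stmt_5_general {H : Type*} [NormedAddCommGroup H] [InnerProductSpace ℝ H] [CompleteSpace H]
    {d : ℕ} (x : Fin d → H)
    (hGram : (Matrix.of fun (i j : Fin d) => (inner ℝ (x i) (x j) : ℝ)).PosDef)
    (P : Finset (Fin d) → H →L[ℝ] H)
    (hsa : ∀ A, IsSelfAdjoint (P A))
    (hidem : ∀ A, P A * P A = P A)
    (hrange : ∀ A : Finset (Fin d), LinearMap.range (P A : H →ₗ[ℝ] H) = Submodule.span ℝ (x '' ↑A))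
    (j : Fin d) (S : Finset (Fin d))
    (T₁ T₂ : Finset (Fin d))
    (e1 : P T₁ * P {j} = P S * P {j}) (e2 : P T₂ * P {j} = P S * P {j}) :
    P (T₁ ∩ T₂) * P {j} = P S * P {j} := by
  have hfin : ∀ A : Finset (Fin d), (span ℝ (x '' ↑A)).HasOrthogonalProjection := fun A => by
    have := FiniteDimensional.span_of_finite ℝ ((A : Set (Fin d)).toFinite.image x)
    infer_instance
  have hP A : P A = (span ℝ (x '' ↑A)).starProjection :=
    (P A).eq_starProjection_of_range_eq (hsa A) (hidem A) (hrange A)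
  have hPj : LinearMap.range (P {j} : H →ₗ[ℝ] H) = span ℝ {x j} := by simp [hrange]
  have hinter : span ℝ (x '' ↑(T₁ ∩ T₂)) = span ℝ (x '' ↑T₁) ⊓ span ℝ (x '' ↑T₂) := by
    rw [Finset.coe_inter]
    exact (Matrix.linearIndependent_of_posDef_gram hGram).span_image_inter _ _
  rw [ContinuousLinearMap.mul_eq_mul_iff_of_range_eq_span_singleton hPj] at e1 e2 ⊢
  simp only [hP] at e1 e2 ⊢
  rw [Submodule.starProjection_eq_of_eq_inf hinter (e1.trans e2.symm), e1]

theorem stmt_5 {H : Type*} [NormedAddCommGroup H] [InnerProductSpace ℝ H] [CompleteSpace H]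
    {d : ℕ} (x : Fin d → H)
    (hGram : (Matrix.of fun (i j : Fin d) => (inner ℝ (x i) (x j) : ℝ)).PosDef)
    (P : Finset (Fin d) → H →L[ℝ] H)
    (hsa : ∀ A, IsSelfAdjoint (P A))
    (hidem : ∀ A, P A * P A = P A)
    (hrange : ∀ A : Finset (Fin d), LinearMap.range (P A : H →ₗ[ℝ] H) = Submodule.span ℝ (x '' ↑A))
    (j : Fin d) (S : Finset (Fin d)) (hS : j ∉ S)
    (T₁ T₂ : Finset (Fin d)) (h1 : j ∉ T₁) (h2 : j ∉ T₂)
    (e1 : P T₁ * P {j} = P S * P {j}) (e2 : P T₂ * P {j} = P S * P {j}) :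
    P (T₁ ∩ T₂) * P {j} = P S * P {j} :=
  stmt_5_general x hGram P hsa hidem hrange j S T₁ T₂ e1 e2
end

section
/- Let x_1,...,x_d be vectors in a Hilbert space H with positive definite Gram matrix. Fix j and S ⊆ [d]\{j}, and define T_j(S) = {T ⊆ [d]\{j} : P_T P_j = P_S P_j}. Then T_j(S) is convex as a subposet of the power set of [d]\{j}: if S_1, S_2 ∈ T_j(S) and S_1 ⊆ S' ⊆ S_2, then S' ∈ T_j(S). -/
/-
Only the nesting of the ranges matters. If `p, q, r` are orthogonal projections with
`range p ≤ range q ≤ range r`, then `q p = p` and, taking adjoints in `r q = q`, also `q r = q`.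
Hence `p a = r a` forces `q a = q r a = q p a = p a`; with `a = P {j}`, `p = P S₁`, `q = P S'`,
`r = P S₂` this is the claim.
-/

theorem IsSelfAdjoint.mul_eq_left_of_mul_eq_right {R : Type*} [Mul R] [StarMul R] {p q : R}
    (hp : IsSelfAdjoint p) (hq : IsSelfAdjoint q) (h : q * p = p) : p * q = p := by
  simpa only [star_mul, hp.star_eq, hq.star_eq] using congr(star $h)

theorem mul_eq_of_mul_eq_right_of_mul_eq_left {M : Type*} [Semigroup M] {p q r a : M}
    (hqp : q * p = p) (hqr : q * r = q) (h : p * a = r * a) : q * a = p * a :=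
  calc q * a = q * (r * a) := by rw [← mul_assoc, hqr]
    _ = q * (p * a) := by rw [h]
    _ = p * a := by rw [← mul_assoc, hqp]

namespace ContinuousLinearMap

variable {𝕜 E : Type*} [RCLike 𝕜] [NormedAddCommGroup E] [InnerProductSpace 𝕜 E]

theorem mul_eq_right_of_range_le {R M : Type*} [Semiring R] [AddCommMonoid M] [Module R M]
    [TopologicalSpace M] {p q : M →L[R] M} (hq : IsIdempotentElem q)
    (hpq : LinearMap.range (p : M →ₗ[R] M) ≤ LinearMap.range (q : M →ₗ[R] M)) : q * p = p := by
  have hq' : IsIdempotentElem (q : M →ₗ[R] M) := congr_arg toLinearMap hq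
  exact coe_injective ((LinearMap.IsIdempotentElem.comp_eq_right_iff hq' _).mpr hpq)

theorem mul_eq_of_range_le_of_range_le [CompleteSpace E] {p q r a : E →L[𝕜] E}
    (hq : IsSelfAdjoint q) (hq' : IsIdempotentElem q) (hr : IsSelfAdjoint r)
    (hr' : IsIdempotentElem r)
    (hpq : LinearMap.range (p : E →ₗ[𝕜] E) ≤ LinearMap.range (q : E →ₗ[𝕜] E))
    (hqr : LinearMap.range (q : E →ₗ[𝕜] E) ≤ LinearMap.range (r : E →ₗ[𝕜] E))
    (h : p * a = r * a) : q * a = p * a :=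
  mul_eq_of_mul_eq_right_of_mul_eq_left (mul_eq_right_of_range_le hq' hpq)
    (hq.mul_eq_left_of_mul_eq_right hr (mul_eq_right_of_range_le hr' hqr)) h

end ContinuousLinearMap

theorem stmt_7_general {H : Type*} [NormedAddCommGroup H] [InnerProductSpace ℝ H] [CompleteSpace H]
    {d : ℕ} (x : Fin d → H)
    (P : Finset (Fin d) → H →L[ℝ] H)
    (hsa : ∀ A, IsSelfAdjoint (P A))
    (hidem : ∀ A, P A * P A = P A)
    (hrange : ∀ A : Finset (Fin d), LinearMap.range (P A : H →ₗ[ℝ] H) = Submodule.span ℝ (x '' ↑A))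
    (j : Fin d) (S : Finset (Fin d))
    (S₁ S₂ S' : Finset (Fin d))
    (e1 : P S₁ * P {j} = P S * P {j}) (e2 : P S₂ * P {j} = P S * P {j})
    (hsub1 : S₁ ⊆ S') (hsub2 : S' ⊆ S₂) :
    P S' * P {j} = P S * P {j} := by
  have hmono : ∀ {A B : Finset (Fin d)}, A ⊆ B →
      LinearMap.range (P A : H →ₗ[ℝ] H) ≤ LinearMap.range (P B : H →ₗ[ℝ] H) := fun hAB => by
    rw [hrange, hrange]
    exact Submodule.span_mono (Set.image_mono (Finset.coe_subset.mpr hAB))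
  rw [ContinuousLinearMap.mul_eq_of_range_le_of_range_le (hsa S') (hidem S') (hsa S₂) (hidem S₂)
    (hmono hsub1) (hmono hsub2) (e1.trans e2.symm), e1]

theorem stmt_7 {H : Type*} [NormedAddCommGroup H] [InnerProductSpace ℝ H] [CompleteSpace H]
    {d : ℕ} (x : Fin d → H)
    (hGram : (Matrix.of fun (i j : Fin d) => (inner ℝ (x i) (x j) : ℝ)).PosDef)
    (P : Finset (Fin d) → H →L[ℝ] H)
    (hsa : ∀ A, IsSelfAdjoint (P A))
    (hidem : ∀ A, P A * P A = P A)
    (hrange : ∀ A : Finset (Fin d), LinearMap.range (P A : H →ₗ[ℝ] H) = Submodule.span ℝ (x '' ↑A))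
    (j : Fin d) (S : Finset (Fin d)) (hS : j ∉ S)
    (S₁ S₂ S' : Finset (Fin d)) (h1 : j ∉ S₁) (h2 : j ∉ S₂) (h' : j ∉ S')
    (e1 : P S₁ * P {j} = P S * P {j}) (e2 : P S₂ * P {j} = P S * P {j})
    (hsub1 : S₁ ⊆ S') (hsub2 : S' ⊆ S₂) :
    P S' * P {j} = P S * P {j} :=
  stmt_7_general x P hsa hidem hrange j S S₁ S₂ S' e1 e2 hsub1 hsub2
end

section
/- Let x_1,...,x_d be vectors in a Hilbert space with positive definite Gram matrix. Fix j and S ⊆ [d]\{j}, let m(S) be the minimal element of the neighborhood lattice T_j(S) = {T ⊆ [d]\{j} : P_T P_j = P_S P_j} (which exists since T_j(S) is closed under intersections). Then for any T ⊆ [d]\{j}: T ∈ T_j(S) if and only if m(S) ⊆ T and P_T (I − P_{m(S)}) P_j = 0. -/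
/-! When `m ⊆ T` we have `P_T P_m = P_m`, so `P_T (I - P_m) P_j = P_T P_j - P_m P_j = P_T P_j - P_S P_j`;
minimality of `m` supplies `m ⊆ T` for the forward direction. -/

theorem mul_one_sub_mul_eq_zero_iff {R : Type*} [Ring R] {a b c : R} (hab : a * b = b) :
    a * (1 - b) * c = 0 ↔ a * c = b * c := by
  rw [mul_sub, mul_one, hab, sub_mul, sub_eq_zero]

theorem ContinuousLinearMap.mul_eq_right_of_range_le_s8 {R M : Type*} [Semiring R] [AddCommMonoid M]
    [Module R M] [TopologicalSpace M] {p q : M →L[R] M} (hq : IsIdempotentElem q)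
    (h : LinearMap.range (p : M →ₗ[R] M) ≤ LinearMap.range (q : M →ₗ[R] M)) : q * p = p :=
  ContinuousLinearMap.coe_inj.1 ((LinearMap.IsIdempotentElem.comp_eq_right_iff
    (ContinuousLinearMap.IsIdempotentElem.toLinearMap hq) _).2 h)

theorem mul_eq_right_of_subset_of_range_eq_span {R M ι : Type*} [Semiring R] [AddCommMonoid M]
    [Module R M] [TopologicalSpace M] {x : ι → M} {P : Finset ι → M →L[R] M}
    (hidem : ∀ A, P A * P A = P A)
    (hrange : ∀ A : Finset ι, LinearMap.range (P A : M →ₗ[R] M) = Submodule.span R (x '' ↑A))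
    {A B : Finset ι} (hAB : A ⊆ B) : P B * P A = P A := by
  refine ContinuousLinearMap.mul_eq_right_of_range_le_s8 (hidem B) ?_
  rw [hrange, hrange]
  exact Submodule.span_mono (Set.image_mono (Finset.coe_subset.2 hAB))

theorem stmt_8_general {H : Type*} [NormedAddCommGroup H] [InnerProductSpace ℝ H]
    {d : ℕ} (x : Fin d → H)
    (P : Finset (Fin d) → H →L[ℝ] H)
    (hidem : ∀ A, P A * P A = P A)
    (hrange : ∀ A : Finset (Fin d), LinearMap.range (P A : H →ₗ[ℝ] H) = Submodule.span ℝ (x '' ↑A))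
    (j : Fin d) (S : Finset (Fin d))
    (m : Finset (Fin d))
    (hm_mem : P m * P {j} = P S * P {j})
    (hm_min : ∀ T : Finset (Fin d), j ∉ T → P T * P {j} = P S * P {j} → m ⊆ T)
    (T : Finset (Fin d)) (hT : j ∉ T) :
    P T * P {j} = P S * P {j} ↔ m ⊆ T ∧ P T * (1 - P m) * P {j} = 0 := by
  have absorb {T : Finset (Fin d)} (hmT : m ⊆ T) : P T * P m = P m :=
    mul_eq_right_of_subset_of_range_eq_span hidem hrange hmT
  rw [← hm_mem]
  constructor
  · intro h
    have hmT : m ⊆ T := hm_min T hT (h.trans hm_mem)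
    exact ⟨hmT, (mul_one_sub_mul_eq_zero_iff (absorb hmT)).2 h⟩
  · rintro ⟨hmT, h0⟩
    exact (mul_one_sub_mul_eq_zero_iff (absorb hmT)).1 h0

theorem stmt_8 {H : Type*} [NormedAddCommGroup H] [InnerProductSpace ℝ H] [CompleteSpace H]
    {d : ℕ} (x : Fin d → H)
    (hGram : (Matrix.of fun (i j : Fin d) => (inner ℝ (x i) (x j) : ℝ)).PosDef)
    (P : Finset (Fin d) → H →L[ℝ] H)
    (hsa : ∀ A, IsSelfAdjoint (P A))
    (hidem : ∀ A, P A * P A = P A)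
    (hrange : ∀ A : Finset (Fin d), LinearMap.range (P A : H →ₗ[ℝ] H) = Submodule.span ℝ (x '' ↑A))
    (j : Fin d) (S : Finset (Fin d)) (hS : j ∉ S)
    (m : Finset (Fin d)) (hmj : j ∉ m)
    (hm_mem : P m * P {j} = P S * P {j})
    (hm_min : ∀ T : Finset (Fin d), j ∉ T → P T * P {j} = P S * P {j} → m ⊆ T)
    (T : Finset (Fin d)) (hT : j ∉ T) :
    P T * P {j} = P S * P {j} ↔ m ⊆ T ∧ P T * (1 - P m) * P {j} = 0 :=
  stmt_8_general x P hidem hrange j S m hm_mem hm_min T hT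
end

section
/- Let x_1,...,x_d be vectors in a Hilbert space H with positive definite Gram matrix Σ. For disjoint A, S, B ⊆ [d], P_A (I − P_S) P_B = 0 holds if and only if Σ_{B,A} − Σ_{B,S} Σ_S^{-1} Σ_{S,A} = 0, where Σ_{B,A} denotes the submatrix of Σ with rows in B and columns in A (and the condition is Σ_{B,A} = 0 when S = ∅). -/
/-!
As `P_A`, `P_B` are the orthogonal projections onto `span x_A`, `span x_B`, the product
`P_A (I - P_S) P_B` vanishes iff `I - P_S` maps every `x_b` into `(span x_A)ᗮ`, i.e. iff
`⟪(I - P_S) x_b, x_a⟫ = 0` for all `a ∈ A`, `b ∈ B`.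
Writing `P_S z = ∑ₜ cₜ x_t`, orthogonality of `z - P_S z` to every `x_s` says `Σ_S c = (⟪x_s, z⟫)ₛ`,
so `c = Σ_S⁻¹ (⟪x_s, z⟫)ₛ`, and `⟪P_S x_b, x_a⟫` is the Schur-complement term `Σ_{B,S} Σ_S⁻¹ Σ_{S,A}`.
-/

section

open Matrix Submodule
open scoped InnerProductSpace

variable {𝕜 E : Type*} [RCLike 𝕜] [NormedAddCommGroup E] [InnerProductSpace 𝕜 E]

theorem Submodule.mem_orthogonal_span_iff {X : Set E} {y : E} :
    y ∈ (span 𝕜 X)ᗮ ↔ ∀ u ∈ X, ⟪u, y⟫_𝕜 = 0 := by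
  rw [← span_singleton_le_iff_mem, ← isOrtho_iff_le, isOrtho_comm, isOrtho_span]
  simp

namespace IsStarProjection

variable [CompleteSpace E] {P : E →L[𝕜] E}

theorem apply_apply (hP : IsStarProjection P) (y : E) : P (P y) = P y :=
  congr($hP.isIdempotentElem y)

theorem apply_eq_zero_iff (hP : IsStarProjection P) {y : E} :
    P y = 0 ↔ y ∈ (LinearMap.range (P : E →ₗ[𝕜] E))ᗮ := by
  constructor
  · rintro hy _ ⟨u, rfl⟩
    rw [hP.isSelfAdjoint.isSymmetric, ContinuousLinearMap.coe_coe, hy, inner_zero_right]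
  · intro hy
    have hPy : ⟪P y, P y⟫_𝕜 = 0 := by
      rw [← ContinuousLinearMap.coe_coe, hP.isSelfAdjoint.isSymmetric, ContinuousLinearMap.coe_coe,
        hP.apply_apply, inner_eq_zero_symm]
      exact hy _ ⟨y, rfl⟩
    exact inner_self_eq_zero.mp hPy

theorem apply_eq_of_mem_range_of_sub_mem_orthogonal (hP : IsStarProjection P) {z w : E}
    (hw : w ∈ LinearMap.range (P : E →ₗ[𝕜] E))
    (hzw : z - w ∈ (LinearMap.range (P : E →ₗ[𝕜] E))ᗮ) : P z = w := by
  obtain ⟨u, rfl⟩ := hw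
  rwa [← hP.apply_eq_zero_iff, map_sub, ContinuousLinearMap.coe_coe, hP.apply_apply,
    sub_eq_zero] at hzw

theorem mul_mul_eq_zero_iff {Q T : E →L[𝕜] E} (hP : IsStarProjection P) {X Y : Set E}
    (hPX : LinearMap.range (P : E →ₗ[𝕜] E) = span 𝕜 X)
    (hQY : LinearMap.range (Q : E →ₗ[𝕜] E) = span 𝕜 Y) :
    P * T * Q = 0 ↔ ∀ v ∈ Y, ∀ u ∈ X, ⟪T v, u⟫_𝕜 = 0 := by
  calc P * T * Q = 0 ↔ ∀ z, T (Q z) ∈ (span 𝕜 X)ᗮ := by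
        simp only [ContinuousLinearMap.ext_iff, mul_apply_eq_comp, _root_.zero_apply,
          hP.apply_eq_zero_iff, hPX]
    _ ↔ span 𝕜 Y ≤ (span 𝕜 X)ᗮ.comap (T : E →ₗ[𝕜] E) := by
        rw [← hQY]
        exact ⟨fun h _ ⟨z, hz⟩ => hz ▸ h z, fun h z => h ⟨z, rfl⟩⟩
    _ ↔ ∀ v ∈ Y, ∀ u ∈ X, ⟪T v, u⟫_𝕜 = 0 := by
        simp only [span_le, Set.subset_def, SetLike.mem_coe, mem_comap, mem_orthogonal_span_iff,
          ContinuousLinearMap.coe_coe, inner_eq_zero_symm (x := T _)]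

theorem apply_eq_sum_gram_inv_mulVec {ι : Type*} [Fintype ι] [DecidableEq ι]
    (hP : IsStarProjection P) {v : ι → E} (hv : LinearIndependent 𝕜 v)
    (hPv : LinearMap.range (P : E →ₗ[𝕜] E) = span 𝕜 (Set.range v)) (z : E) :
    P z = ∑ t, ((gram 𝕜 v)⁻¹ *ᵥ fun s => ⟪v s, z⟫_𝕜) t • v t := by
  set c := (gram 𝕜 v)⁻¹ *ᵥ fun s => ⟪v s, z⟫_𝕜
  have hGc : gram 𝕜 v *ᵥ c = fun s => ⟪v s, z⟫_𝕜 := by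
    rw [mulVec_mulVec, mul_nonsing_inv _ (det_gram_ne_zero_iff_linearIndependent.mpr hv).isUnit,
      one_mulVec]
  refine hP.apply_eq_of_mem_range_of_sub_mem_orthogonal ?_ ?_ <;> rw [hPv]
  · exact sum_mem fun t _ => smul_mem _ _ (subset_span ⟨t, rfl⟩)
  · rw [mem_orthogonal_span_iff]
    rintro _ ⟨s, rfl⟩
    rw [inner_sub_right, inner_sum, sub_eq_zero, ← congrFun hGc s]
    simp only [inner_smul_right, mulVec, dotProduct, gram_apply, mul_comm]

end IsStarProjection

theorem IsStarProjection.real_inner_apply_eq_sum_gram_inv {F ι : Type*} [NormedAddCommGroup F]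
    [InnerProductSpace ℝ F] [CompleteSpace F] [Fintype ι] [DecidableEq ι] {P : F →L[ℝ] F}
    (hP : IsStarProjection P) {v : ι → F} (hv : LinearIndependent ℝ v)
    (hPv : LinearMap.range (P : F →ₗ[ℝ] F) = span ℝ (Set.range v)) (z y : F) :
    ⟪P z, y⟫_ℝ = ∑ s, ∑ t, ⟪z, v s⟫_ℝ * (gram ℝ v)⁻¹ s t * ⟪v t, y⟫_ℝ := by
  have hsymm : ∀ s t, (gram ℝ v)⁻¹ t s = (gram ℝ v)⁻¹ s t := fun s t =>
    (isHermitian_gram ℝ v).inv.apply s t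
  rw [hP.apply_eq_sum_gram_inv_mulVec hv hPv, sum_inner, Finset.sum_comm]
  simp only [real_inner_smul_left, mulVec, dotProduct, Finset.sum_mul, hsymm, real_inner_comm z]
  exact Finset.sum_congr rfl fun s _ => Finset.sum_congr rfl fun t _ => by ring

end

theorem stmt_10_general {H : Type*} [NormedAddCommGroup H] [InnerProductSpace ℝ H] [CompleteSpace H]
    {d : ℕ} (x : Fin d → H)
    (hGram : (Matrix.of fun (i j : Fin d) => (inner ℝ (x i) (x j) : ℝ)).PosDef)
    (P : Finset (Fin d) → H →L[ℝ] H)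
    (hsa : ∀ A, IsSelfAdjoint (P A))
    (hidem : ∀ A, P A * P A = P A)
    (hrange : ∀ A : Finset (Fin d), LinearMap.range (P A : H →ₗ[ℝ] H) = Submodule.span ℝ (x '' ↑A))
    (A S B : Finset (Fin d)) :
    P A * (1 - P S) * P B = 0 ↔
      ∀ b ∈ B, ∀ a ∈ A,
        (inner ℝ (x b) (x a) : ℝ) -
          ∑ s : S, ∑ t : S,
            (inner ℝ (x b) (x s) : ℝ) *
              ((Matrix.of fun (s t : S) => (inner ℝ (x (s : Fin d)) (x (t : Fin d)) : ℝ))⁻¹ s t) *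
              (inner ℝ (x t) (x a) : ℝ) = 0 := by
  have hP : ∀ C, IsStarProjection (P C) := fun C => ⟨hidem C, hsa C⟩
  have hxS : LinearIndependent ℝ fun s : S => x s :=
    (Matrix.linearIndependent_of_posDef_gram hGram).comp _ Subtype.val_injective
  have hPS : LinearMap.range (P S : H →ₗ[ℝ] H) = Submodule.span ℝ (Set.range fun s : S => x s) := by
    rw [hrange, Set.image_eq_range]
    rfl
  rw [(hP A).mul_mul_eq_zero_iff (hrange A) (hrange B)]
  simp only [Set.forall_mem_image, _root_.sub_apply, one_apply_eq_self, inner_sub_left,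
    (hP S).real_inner_apply_eq_sum_gram_inv hxS hPS]
  rfl

theorem stmt_10 {H : Type*} [NormedAddCommGroup H] [InnerProductSpace ℝ H] [CompleteSpace H]
    {d : ℕ} (x : Fin d → H)
    (hGram : (Matrix.of fun (i j : Fin d) => (inner ℝ (x i) (x j) : ℝ)).PosDef)
    (P : Finset (Fin d) → H →L[ℝ] H)
    (hsa : ∀ A, IsSelfAdjoint (P A))
    (hidem : ∀ A, P A * P A = P A)
    (hrange : ∀ A : Finset (Fin d), LinearMap.range (P A : H →ₗ[ℝ] H) = Submodule.span ℝ (x '' ↑A))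
    (A S B : Finset (Fin d))
    (hAS : Disjoint A S) (hAB : Disjoint A B) (hSB : Disjoint S B) :
    P A * (1 - P S) * P B = 0 ↔
      ∀ b ∈ B, ∀ a ∈ A,
        (inner ℝ (x b) (x a) : ℝ) -
          ∑ s : S, ∑ t : S,
            (inner ℝ (x b) (x s) : ℝ) *
              ((Matrix.of fun (s t : S) => (inner ℝ (x (s : Fin d)) (x (t : Fin d)) : ℝ))⁻¹ s t) *
              (inner ℝ (x t) (x a) : ℝ) = 0 :=
  stmt_10_general x hGram P hsa hidem hrange A S B
end

section
/- In an undirected graph, separation satisfies the reduction property: if C_1 ⊎ C_2 (a disjoint union) separates A from B, and A separates C_2 from B, then C_1 alone separates A from B. -/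
/-- `C` separates `A` from `B` in `G`: every walk from `A` to `B` meets `C`. -/
def Separates {V : Type*} (G : SimpleGraph V) (A C B : Set V) : Prop :=
  ∀ a ∈ A, ∀ b ∈ B, ∀ p : G.Walk a b, ∃ c ∈ C, c ∈ p.support

theorem stmt_16 {d : ℕ} (G : SimpleGraph (Fin d)) (A B C₁ C₂ : Set (Fin d))
    (hAB : Disjoint A B) (hAC₁ : Disjoint A C₁) (hAC₂ : Disjoint A C₂)
    (hBC₁ : Disjoint B C₁) (hBC₂ : Disjoint B C₂) (hC : Disjoint C₁ C₂)
    (h1 : Separates G A (C₁ ∪ C₂) B) (h2 : Separates G C₂ A B) :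
    Separates G A C₁ B := by
  intro a ha b hb p
  -- strong induction on p.length
  suffices H : ∀ n : ℕ, ∀ a, a ∈ A → ∀ p : G.Walk a b, p.length = n →
      ∃ c ∈ C₁, c ∈ p.support from H p.length a ha p rfl
  intro n
  induction n using Nat.strong_induction_on with
  | _ n ih =>
    intro a ha p hlen
    obtain ⟨c, hc, hcp⟩ := h1 a ha b hb p
    rcases hc with hc | hc
    · exact ⟨c, hc, hcp⟩
    · -- c ∈ C₂; drop until c
      have hca : c ≠ a := fun h => hAC₂.ne_of_mem (h ▸ ha) hc rfl
      set q := p.dropUntil c hcp with hq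
      have hlenq : q.length < p.length := by
        rw [hq]
        have hspec := p.take_spec hcp
        have := congrArg SimpleGraph.Walk.length hspec
        rw [SimpleGraph.Walk.length_append] at this
        have hpos : 0 < (p.takeUntil c hcp).length := by
          by_contra h
          push_neg at h
          interval_cases h' : (p.takeUntil c hcp).length
          exact hca ((p.takeUntil c hcp).eq_of_length_eq_zero h').symm
        omega
      obtain ⟨a', ha', ha'q⟩ := h2 c hc b hb q
      have hsub : q.support ⊆ p.support := p.support_dropUntil_subset hcp
      set r := q.dropUntil a' ha'q with hr
      have hlenr : r.length < n := by
        rw [hr]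
        have := q.length_dropUntil_le ha'q
        omega
      obtain ⟨c₁, hc₁, hc₁r⟩ := ih r.length hlenr a' ha' r rfl
      exact ⟨c₁, hc₁, hsub (q.support_dropUntil_subset ha'q hc₁r)⟩
end

section
/- Let x_1,...,x_d ∈ H with positive definite Gram matrix, and let G be a directed acyclic graph on [d] with parent sets Π_j and non-descendant sets N_j. Then the local condition 'P_i (I − P_{Π_j}) P_j = 0 for all j ∈ [d] and all i ∈ N_j' is equivalent to the pairwise condition 'P_i (I − P_{Π_i}) (I − P_{Π_j}) P_j = 0 for all distinct i, j ∈ [d]'. -/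
/-!
Since `P_i Z P_j = 0` iff `⟪x_i, Z x_j⟫ = 0`, both conditions are statements about the residuals
`r j = (1 - P_{Π_j}) x_j`, for which `x_j - r j` lies in the span of the parents of `j`: the
local one says `⟪x_i, r j⟫ = 0` for every non-descendant `i ≠ j`, the pairwise one that the
residuals are mutually orthogonal. If `i` is not a descendant of `j`, neither is any parent of
`i`, so the local condition makes `r j` orthogonal to `x_i` and to its parents, hence to `r i`;
acyclicity lets one choose the orientation of every pair. Conversely, orthogonality of `r j` to
`x_k = r k + (x_k - r k)` follows by well-founded induction over the ancestors of `k`.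
-/

open Relation Submodule

section Residuals

variable {𝕜 E ι : Type*} [RCLike 𝕜] [NormedAddCommGroup E] [InnerProductSpace 𝕜 E]

theorem inner_eq_zero_of_mem_span {w y : E} {s : Set E} (hs : ∀ v ∈ s, inner 𝕜 v w = 0)
    (hy : y ∈ span 𝕜 s) : inner 𝕜 y w = 0 :=
  mem_orthogonal_singleton_iff_inner_left.1 <|
    span_le.2 (fun v hv => mem_orthogonal_singleton_iff_inner_left.2 (hs v hv)) hy

variable {x r : ι → E} {Par : ι → Set ι}

theorem inner_residual_eq_zero_of_local (hr : ∀ j, x j - r j ∈ span 𝕜 (x '' Par j))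
    (hloc : ∀ j i, i ≠ j → ¬ TransGen (fun u v => u ∈ Par v) j i →
      inner 𝕜 (x i) (r j) = 0)
    {a b : ι} (hab : a ≠ b) (hba : ¬ TransGen (fun u v => u ∈ Par v) b a) :
    inner 𝕜 (r a) (r b) = 0 := by
  have hparents : inner 𝕜 (x a - r a) (r b) = 0 := by
    refine inner_eq_zero_of_mem_span ?_ (hr a)
    rintro _ ⟨m, hm, rfl⟩
    refine hloc b m ?_ fun hbm => hba (hbm.tail hm)
    rintro rfl
    exact hba (.single hm)
  rw [← sub_sub_cancel (x a) (r a), inner_sub_left, hloc b a hab hba, hparents, sub_zero]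

theorem pairwise_inner_residual_eq_zero_of_local
    (hacyc : ∀ a, ¬ TransGen (fun u v => u ∈ Par v) a a)
    (hr : ∀ j, x j - r j ∈ span 𝕜 (x '' Par j))
    (hloc : ∀ j i, i ≠ j → ¬ TransGen (fun u v => u ∈ Par v) j i →
      inner 𝕜 (x i) (r j) = 0) :
    Pairwise fun i j => inner 𝕜 (r i) (r j) = 0 := by
  intro i j hij
  by_cases hji : TransGen (fun u v => u ∈ Par v) j i
  · exact inner_eq_zero_symm.1 <|
      inner_residual_eq_zero_of_local hr hloc hij.symm fun hij => hacyc j (hji.trans hij)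
  · exact inner_residual_eq_zero_of_local hr hloc hij hji

theorem inner_residual_eq_zero_of_pairwise
    (hwf : WellFounded (TransGen fun u v => u ∈ Par v))
    (hr : ∀ j, x j - r j ∈ span 𝕜 (x '' Par j))
    (hpair : Pairwise fun i j => inner 𝕜 (r i) (r j) = 0) (j k : ι) :
    k ≠ j → ¬ TransGen (fun u v => u ∈ Par v) j k → inner 𝕜 (x k) (r j) = 0 := by
  induction k using hwf.induction with
  | _ k ih =>
  intro hkj hjk
  have hparents : inner 𝕜 (x k - r k) (r j) = 0 := by
    refine inner_eq_zero_of_mem_span ?_ (hr k)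
    rintro _ ⟨m, hm, rfl⟩
    refine ih m (.single hm) ?_ fun hjm => hjk (hjm.tail hm)
    rintro rfl
    exact hjk (.single hm)
  rw [← sub_add_cancel (x k) (r k), inner_add_left, hpair hkj, hparents, add_zero]

end Residuals

theorem Relation.wellFounded_transGen_of_irrefl {ι : Type*} [Finite ι] {R : ι → ι → Prop}
    (hirrefl : ∀ a, ¬ TransGen R a a) : WellFounded (TransGen R) :=
  have : IsTrans ι (TransGen R) := ⟨fun _ _ _ => TransGen.trans⟩
  have : Std.Irrefl (TransGen R) := ⟨hirrefl⟩
  Finite.wellFounded_of_trans_of_irrefl _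

theorem ContinuousLinearMap.mul_eq_zero_iff_of_range_eq_span_singleton {R M : Type*}
    [Semiring R] [AddCommMonoid M] [Module R M] [TopologicalSpace M] {T Q : M →L[R] M} {v : M}
    (hQ : LinearMap.range (Q : M →ₗ[R] M) = R ∙ v) : T * Q = 0 ↔ T v = 0 := by
  rw [← coe_inj, toLinearMap_mul, toLinearMap_zero, Module.End.mul_eq_comp,
    ← LinearMap.range_le_ker_iff, hQ, span_singleton_le_iff_mem, LinearMap.mem_ker, coe_coe]

section Projections

variable {𝕜 E : Type*} [RCLike 𝕜] [NormedAddCommGroup E] [InnerProductSpace 𝕜 E]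
  [CompleteSpace E]

theorem IsSelfAdjoint.apply_eq_zero_iff_inner_eq_zero {Q : E →L[𝕜] E} {v z : E}
    (hQ : IsSelfAdjoint Q) (hrange : LinearMap.range (Q : E →ₗ[𝕜] E) = 𝕜 ∙ v) :
    Q z = 0 ↔ inner 𝕜 v z = 0 := by
  rw [← mem_orthogonal_singleton_iff_inner_right, ← hrange, Q.orthogonal_range, hQ.adjoint_eq,
    LinearMap.mem_ker, ContinuousLinearMap.coe_coe]

theorem IsSelfAdjoint.mul_mul_eq_zero_iff_inner_eq_zero {Q Q' : E →L[𝕜] E} {u v : E}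
    (T : E →L[𝕜] E) (hQ : IsSelfAdjoint Q)
    (hu : LinearMap.range (Q : E →ₗ[𝕜] E) = 𝕜 ∙ u)
    (hv : LinearMap.range (Q' : E →ₗ[𝕜] E) = 𝕜 ∙ v) :
    Q * T * Q' = 0 ↔ inner 𝕜 u (T v) = 0 := by
  rw [ContinuousLinearMap.mul_eq_zero_iff_of_range_eq_span_singleton hv, mul_apply_eq_comp,
    hQ.apply_eq_zero_iff_inner_eq_zero hu]

end Projections

theorem stmt_18_general {H : Type*} [NormedAddCommGroup H] [InnerProductSpace ℝ H] [CompleteSpace H]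
    {d : ℕ} (x : Fin d → H)
    (P : Finset (Fin d) → H →L[ℝ] H)
    (hsa : ∀ A, IsSelfAdjoint (P A))
    (hrange : ∀ A : Finset (Fin d), LinearMap.range (P A : H →ₗ[ℝ] H) = Submodule.span ℝ (x '' ↑A))
    (Par : Fin d → Finset (Fin d))
    (hacyc : ∀ a : Fin d, ¬ Relation.TransGen (fun u v : Fin d => u ∈ Par v) a a) :
    (∀ j i : Fin d, i ≠ j → ¬ Relation.TransGen (fun u v : Fin d => u ∈ Par v) j i →
        P {i} * (1 - P (Par j)) * P {j} = 0) ↔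
      (∀ i j : Fin d, i ≠ j →
        P {i} * (1 - P (Par i)) * (1 - P (Par j)) * P {j} = 0) := by
  set r : Fin d → H := fun j => (1 - P (Par j)) (x j)
  have hr : ∀ j, x j - r j ∈ span ℝ (x '' ↑(Par j)) := fun j => by simp [r, ← hrange]
  have hsingle (i : Fin d) : LinearMap.range (P {i} : H →ₗ[ℝ] H) = ℝ ∙ x i := by
    rw [hrange, Finset.coe_singleton, Set.image_singleton]
  have hlocal (i j : Fin d) : P {i} * (1 - P (Par j)) * P {j} = 0 ↔ inner ℝ (x i) (r j) = 0 :=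
    (hsa {i}).mul_mul_eq_zero_iff_inner_eq_zero _ (hsingle i) (hsingle j)
  have hpairwise (i j : Fin d) :
      P {i} * (1 - P (Par i)) * (1 - P (Par j)) * P {j} = 0 ↔ inner ℝ (r i) (r j) = 0 := by
    have hsymm : inner ℝ (r i) (r j) = inner ℝ (x i) ((1 - P (Par i)) (r j)) :=
      ((IsSelfAdjoint.one _).sub (hsa (Par i))).isSymmetric (x i) (r j)
    rw [mul_assoc (P {i}), (hsa {i}).mul_mul_eq_zero_iff_inner_eq_zero _ (hsingle i) (hsingle j),
      mul_apply_eq_comp, hsymm]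
  simp only [hlocal, hpairwise]
  exact ⟨fun hloc => pairwise_inner_residual_eq_zero_of_local (Par := (Par ·)) hacyc hr hloc,
    fun hpair => inner_residual_eq_zero_of_pairwise (Par := (Par ·))
      (wellFounded_transGen_of_irrefl hacyc) hr hpair⟩

theorem stmt_18 {H : Type*} [NormedAddCommGroup H] [InnerProductSpace ℝ H] [CompleteSpace H]
    {d : ℕ} (x : Fin d → H)
    (hGram : (Matrix.of fun (i j : Fin d) => (inner ℝ (x i) (x j) : ℝ)).PosDef)
    (P : Finset (Fin d) → H →L[ℝ] H)
    (hsa : ∀ A, IsSelfAdjoint (P A))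
    (hidem : ∀ A, P A * P A = P A)
    (hrange : ∀ A : Finset (Fin d), LinearMap.range (P A : H →ₗ[ℝ] H) = Submodule.span ℝ (x '' ↑A))
    (Par : Fin d → Finset (Fin d))
    (hacyc : ∀ a : Fin d, ¬ Relation.TransGen (fun u v : Fin d => u ∈ Par v) a a) :
    (∀ j i : Fin d, i ≠ j → ¬ Relation.TransGen (fun u v : Fin d => u ∈ Par v) j i →
        P {i} * (1 - P (Par j)) * P {j} = 0) ↔
      (∀ i j : Fin d, i ≠ j →
        P {i} * (1 - P (Par i)) * (1 - P (Par j)) * P {j} = 0) :=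
  stmt_18_general x P hsa hrange Par hacyc
end
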